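/- (Correctness of one iteration of the division loop.) Let f ∈ ℂ⟦x⟧ have zero constant coefficient, let g = exp(f) and u = exp(−f), and let s ≥ 1 and m ≥ 1. Let g₀ be the polynomial of degree < sm whose coefficients agree with those of g in all degrees < sm (so g₀ has constant coefficient 1 and is a unit in ℂ⟦x⟧), and set q := δ(g₀) · g₀⁻¹. Then for every k ≥ s, q_[k] ≡ −u · ψ (mod x^m), where ψ is the k-th block of (Σ_{i<k} q_[i] x^{im}) · g₀. -/

import Mathlib

open PowerSeries

/-- `exp(f)`: substitution of `f` (with nilpotent, i.e. zero, constant coefficient)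
into the exponential series `Σ_{n≥0} xⁿ/n!`.  Since the constant coefficient of `f`
vanishes, the coefficient of degree `d` only receives contributions from `f^n` with
`n ≤ d`, so the following finite sum computes it. -/
noncomputable def expPS (f : PowerSeries ℂ) : PowerSeries ℂ :=
  PowerSeries.mk fun d => ∑ n ∈ Finset.range (d + 1),
    PowerSeries.coeff d (f ^ n) / (n.factorial : ℂ)

/-- The operator `δh = x · h′`, where `h′` is the formal derivative. -/
noncomputable def delta (h : PowerSeries ℂ) : PowerSeries ℂ :=
  PowerSeries.X * h.derivativeFun

/-- `a ≡ b (mod x^N)`: the coefficients of `a` and `b` agree in every degree `< N`. -/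
def modX (N : ℕ) (a b : PowerSeries ℂ) : Prop :=
  ∀ i < N, PowerSeries.coeff i a = PowerSeries.coeff i b

/-- The `k`-th block (of size `m`) of a power series: the polynomial (as a power
series) of degree `< m` whose coefficient of `x^j` is the coefficient of `x^{km+j}`. -/
noncomputable def blk (m k : ℕ) (h : PowerSeries ℂ) : PowerSeries ℂ :=
  PowerSeries.mk fun j => if j < m then PowerSeries.coeff (k * m + j) h else 0

/-!
Since `q · g₀ = δ g₀` is a polynomial of degree `< s m ≤ k m`, splitting
`q = Q + x^{km} R`, where `Q = Σ_{i<k} q_[i] x^{im}` is the truncation of `q` below degree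
`k m`, gives `Q g₀ = δ g₀ - x^{km} R g₀`. Hence `ψ ≡ -R g₀` and `q_[k] ≡ R (mod x^m)`.
Moreover `g₀ ≡ g (mod x^{sm})` and `u g = 1`, the image of `exp(X) exp(-X) = 1` under
`X ↦ f`, so `u g₀ ≡ 1 (mod x^m)` and `-u ψ ≡ u g₀ R ≡ R ≡ q_[k]`.
-/

open Finset

namespace PowerSeries

theorem coeff_subst_eq_sum_range {R : Type*} [CommRing R] {f : R⟦X⟧}
    (hf : constantCoeff f = 0) (φ : R⟦X⟧) (d : ℕ) :
    coeff d (φ.subst f) = ∑ n ∈ range (d + 1), coeff n φ * coeff d (f ^ n) := by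
  rw [coeff_subst' (.of_constantCoeff_zero' hf)]
  refine finsum_eq_sum_of_support_subset _ fun n hn => ?_
  rw [coe_range, Set.mem_Iio, Nat.lt_succ_iff]
  by_contra! hdn
  refine hn ?_
  change coeff n φ • coeff d (f ^ n) = 0
  rw [X_pow_dvd_iff.mp (pow_dvd_pow_of_dvd (X_dvd_iff.mpr hf) n) d hdn, smul_zero]

theorem trunc_sModEq {R : Type*} [CommRing R] (n : ℕ) (f : R⟦X⟧) :
    (trunc n f : R⟦X⟧) ≡ f [SMOD Ideal.span {X ^ n}] := by
  rw [SModEq.sub_mem, Ideal.mem_span_singleton]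
  exact ⟨-mk fun i ↦ coeff (i + n) f, by linear_combination -eq_X_pow_mul_shift_add_trunc n f⟩

end PowerSeries

open PowerSeries

theorem expPS_eq_subst {f : ℂ⟦X⟧} (hf : constantCoeff f = 0) :
    expPS f = (exp ℂ).subst f := by
  ext d
  rw [coeff_subst_eq_sum_range hf, expPS, coeff_mk]
  refine sum_congr rfl fun n _ => ?_
  rw [coeff_exp]
  simp [div_eq_inv_mul]

theorem expPS_mul_expPS_neg {f : ℂ⟦X⟧} (hf : constantCoeff f = 0) :
    expPS f * expPS (-f) = 1 := by
  have hsf : HasSubst f := .of_constantCoeff_zero' hf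
  have hneg : (exp ℂ).subst (-f) = (evalNegHom (exp ℂ)).subst f := by
    rw [evalNegHom, rescale_eq_subst,
      subst_comp_subst_apply (.of_constantCoeff_zero' (by simp)) hsf,
      subst_smul hsf (-1 : ℂ) X, subst_X hsf, neg_one_smul]
  rw [expPS_eq_subst hf, expPS_eq_subst (by rw [map_neg, hf, neg_zero]), hneg,
    ← subst_mul hsf, exp_mul_exp_neg_eq_one, ← coe_substAlgHom hsf, map_one]

theorem constantCoeff_expPS (f : ℂ⟦X⟧) : constantCoeff (expPS f) = 1 := by
  rw [← coeff_zero_eq_constantCoeff_apply, expPS, coeff_mk]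
  simp

theorem expPS_neg_mul_trunc_sModEq_one {f : ℂ⟦X⟧} (hf : constantCoeff f = 0) (n : ℕ) :
    expPS (-f) * trunc n (expPS f) ≡ 1 [SMOD Ideal.span {(X : ℂ⟦X⟧) ^ n}] :=
  calc expPS (-f) * trunc n (expPS f)
      ≡ expPS (-f) * expPS f [SMOD Ideal.span {(X : ℂ⟦X⟧) ^ n}] :=
        SModEq.rfl.mul (trunc_sModEq n _)
    _ = 1 := by rw [mul_comm, expPS_mul_expPS_neg hf]

theorem coeff_delta (h : ℂ⟦X⟧) (n : ℕ) : coeff n (delta h) = n * coeff n h := by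
  rcases n with _ | n
  · simp [delta]
  · rw [delta, coeff_succ_X_mul]
    change coeff n (derivative ℂ h) = _
    rw [coeff_derivative, mul_comm, Nat.cast_succ]

theorem modX_iff_sModEq {N : ℕ} {a b : ℂ⟦X⟧} :
    modX N a b ↔ a ≡ b [SMOD Ideal.span {(X : ℂ⟦X⟧) ^ N}] := by
  simp only [SModEq.sub_mem, Ideal.mem_span_singleton, X_pow_dvd_iff, map_sub, sub_eq_zero]
  rfl

theorem blk_sModEq_mk_coeff_add (m k : ℕ) (h : ℂ⟦X⟧) :
    blk m k h ≡ mk (fun i ↦ coeff (i + k * m) h) [SMOD Ideal.span {(X : ℂ⟦X⟧) ^ m}] := by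
  rw [← modX_iff_sModEq]
  intro j hj
  rw [blk, coeff_mk, coeff_mk, if_pos hj, add_comm]

theorem blk_add_X_pow_mul_sModEq {m k : ℕ} {p h : ℂ⟦X⟧}
    (hp : ∀ n, k * m ≤ n → coeff n p = 0) :
    blk m k (p + X ^ (k * m) * h) ≡ h [SMOD Ideal.span {(X : ℂ⟦X⟧) ^ m}] := by
  rw [← modX_iff_sModEq]
  intro j hj
  rw [blk, coeff_mk, if_pos hj, map_add, hp _ (Nat.le_add_right _ _), zero_add,
    coeff_X_pow_mul', if_pos (Nat.le_add_right _ _), Nat.add_sub_cancel_left]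

theorem sum_blk_mul_X_pow_eq_trunc (m k : ℕ) (h : ℂ⟦X⟧) :
    ∑ i ∈ range k, blk m i h * X ^ (i * m) = (trunc (k * m) h : ℂ⟦X⟧) := by
  induction k with
  | zero => simp
  | succ k ih =>
    ext n
    rw [sum_range_succ, ih, map_add, coeff_mul_X_pow', Polynomial.coeff_coe, Polynomial.coeff_coe,
      coeff_trunc, coeff_trunc, blk, add_one_mul]
    split_ifs <;> simp_all <;> omega

theorem blk_sum_blk_mul_X_pow_mul_sModEq {m k : ℕ} {q P : ℂ⟦X⟧}
    (hqP : ∀ n, k * m ≤ n → coeff n (q * P) = 0) :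
    blk m k ((∑ i ∈ range k, blk m i q * X ^ (i * m)) * P) ≡ -(blk m k q * P)
      [SMOD Ideal.span {(X : ℂ⟦X⟧) ^ m}] := by
  set R : ℂ⟦X⟧ := mk fun i ↦ coeff (i + k * m) q
  have hsplit : (trunc (k * m) q : ℂ⟦X⟧) * P = q * P + X ^ (k * m) * -(R * P) := by
    linear_combination (-P) * eq_X_pow_mul_shift_add_trunc (k * m) q
  rw [sum_blk_mul_X_pow_eq_trunc, hsplit]
  exact (blk_add_X_pow_mul_sModEq hqP).trans ((blk_sModEq_mk_coeff_add m k q).symm.mul .rfl).neg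

/-- Correctness of one iteration of the division loop: with `g = exp(f)`,
`u = exp(−f)`, `g₀` the truncation of `g` to degree `< sm`, and
`q = δ(g₀) · g₀⁻¹`, for every `k ≥ s` we have `q_[k] ≡ −u·ψ (mod x^m)`, where
`ψ` is the `k`-th block of `(Σ_{i<k} q_[i] x^{im}) · g₀`. -/
theorem division_loop_correct (f : PowerSeries ℂ)
    (hf : PowerSeries.constantCoeff f = 0)
    (g u : PowerSeries ℂ) (hg : g = expPS f) (hu : u = expPS (-f))
    (s m : ℕ) (hs : 1 ≤ s) (hm : 1 ≤ m)
    (g₀ : Polynomial ℂ) (hg₀ : g₀ = PowerSeries.trunc (s * m) g)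
    (q : PowerSeries ℂ) (hq : q = delta (g₀ : PowerSeries ℂ) * ((g₀ : PowerSeries ℂ))⁻¹)
    (k : ℕ) (hk : s ≤ k)
    (ψ : PowerSeries ℂ)
    (hψ : ψ = blk m k ((∑ i ∈ Finset.range k, blk m i q * PowerSeries.X ^ (i * m)) *
      (g₀ : PowerSeries ℂ))) :
    modX m (blk m k q) (-(u * ψ)) := by
  subst hg hu hg₀
  set G : ℂ⟦X⟧ := ((trunc (s * m) (expPS f) : Polynomial ℂ) : ℂ⟦X⟧)
  set I : Ideal ℂ⟦X⟧ := Ideal.span {X ^ m}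
  have hqG : q * G = delta G := by
    rw [hq, mul_assoc, PowerSeries.inv_mul_cancel _ ?_, mul_one]
    rw [← coeff_zero_eq_constantCoeff_apply, coeff_coe_trunc_of_lt (Nat.mul_pos hs hm),
      coeff_zero_eq_constantCoeff_apply, constantCoeff_expPS]
    exact one_ne_zero
  have hψG : ψ ≡ -(blk m k q * G) [SMOD I] :=
    hψ ▸ blk_sum_blk_mul_X_pow_mul_sModEq fun n hn => by
      rw [hqG, coeff_delta, Polynomial.coeff_coe, coeff_trunc,
        if_neg (not_lt.mpr ((Nat.mul_le_mul_right m hk).trans hn)), mul_zero]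
  have huG : expPS (-f) * G ≡ 1 [SMOD I] :=
    (expPS_neg_mul_trunc_sModEq_one hf _).mono
      (Ideal.span_singleton_le_span_singleton.mpr (pow_dvd_pow X (Nat.le_mul_of_pos_left m hs)))
  rw [modX_iff_sModEq]
  calc blk m k q = 1 * blk m k q := (one_mul _).symm
    _ ≡ expPS (-f) * G * blk m k q [SMOD I] := huG.symm.mul .rfl
    _ = -(expPS (-f) * -(blk m k q * G)) := by ring
    _ ≡ -(expPS (-f) * ψ) [SMOD I] := (SModEq.rfl.mul hψG.symm).neg
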